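/- arXiv:2604.22453 — 2 statements merged into one kernel-verified Lean document; each statement's English description precedes it below -/
import Mathlib

section
/- Let d, T be positive integers and let L, M ∈ 𝕃. Then the squared adapted Bures–Wasserstein distance decomposes column-wise as a sum of squared classical Bures–Wasserstein distances between the column covariances: d_ABW(L, M)² = ∑_{t=1}^T d_BW(Σ̃_t^L, Σ̃_t^M)². -/
open Matrix

set_option maxHeartbeats 1000000
set_option linter.unusedSectionVars false


/-- Squared Frobenius norm of a real matrix: `‖A‖_F² = tr(Aᵀ A)`. -/
noncomputable def frobSq {m n : Type*} [Fintype m] [Fintype n] (A : Matrix m n ℝ) : ℝ :=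
  Matrix.trace (Aᵀ * A)

/-- `O ∈ O(d)`: a real orthogonal matrix. -/
def IsOrth {d : ℕ} (O : Matrix (Fin d) (Fin d) ℝ) : Prop :=
  O * Oᵀ = 1 ∧ Oᵀ * O = 1

/-- `L ∈ 𝕃`: block-lower triangular w.r.t. `T` blocks of size `d`
(indices are pairs `(i, t)` with `i : Fin d` the within-block index and `t : Fin T`
the block index); the block `L_{t,s}` vanishes for `t < s`. -/
def BlockLT {d T : ℕ} (L : Matrix (Fin d × Fin T) (Fin d × Fin T) ℝ) : Prop :=
  ∀ p q : Fin d × Fin T, p.2 < q.2 → L p q = 0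

/-- `O ∈ 𝕆`: block-diagonal with orthogonal `d × d` diagonal blocks. -/
def BlockOrth {d T : ℕ} (O : Matrix (Fin d × Fin T) (Fin d × Fin T) ℝ) : Prop :=
  ∃ f : Fin T → Matrix (Fin d) (Fin d) ℝ, (∀ t, IsOrth (f t)) ∧ O = Matrix.blockDiagonal f

/-- Truncated `t`-th column `L̃_t ∈ ℝ^{(T−t)d×d}` (0-based `t`): the rows of the `t`-th block
column of `L` from block row `t` on. -/
def truncCol {d T : ℕ} (L : Matrix (Fin d × Fin T) (Fin d × Fin T) ℝ) (t : Fin T) :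
    Matrix (Fin (T - t.val) × Fin d) (Fin d) ℝ :=
  fun p j => L (p.2, ⟨t.val + p.1.val, by have := p.1.isLt; omega⟩) (j, t)

/-- Column covariance `Σ̃_t^L = L̃_t L̃_tᵀ`. -/
noncomputable def colCov {d T : ℕ} (L : Matrix (Fin d × Fin T) (Fin d × Fin T) ℝ) (t : Fin T) :
    Matrix (Fin (T - t.val) × Fin d) (Fin (T - t.val) × Fin d) ℝ :=
  truncCol L t * (truncCol L t)ᵀ

/-- The positive semidefinite square root of a PSD matrix (junk value `0` otherwise). -/
noncomputable def sqrtPSD {n : Type*} [Fintype n] [DecidableEq n] (P : Matrix n n ℝ) :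
    Matrix n n ℝ :=
  by classical exact if h : P.PosSemidef then (h.1.eigenvectorUnitary : Matrix n n ℝ) *
      Matrix.diagonal (fun i => Real.sqrt (h.1.eigenvalues i)) *
      (star h.1.eigenvectorUnitary : Matrix n n ℝ) else 0

/-- The Bures–Wasserstein distance between (PSD) matrices. -/
noncomputable def dBW {n : Type*} [Fintype n] [DecidableEq n] (S1 S2 : Matrix n n ℝ) : ℝ :=
  Real.sqrt (Matrix.trace S1 + Matrix.trace S2 -
    2 * Matrix.trace (sqrtPSD (sqrtPSD S2 * S1 * sqrtPSD S2)))
section sqrtHelpers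
open scoped MatrixOrder

lemma sqrtPSD_eq_cfc {n : Type*} [Fintype n] [DecidableEq n] {P : Matrix n n ℝ}
    (hP : P.PosSemidef) : sqrtPSD P = CFC.sqrt P := by
  rw [sqrtPSD, dif_pos hP, CFC.sqrt_eq_cfc, cfc_nnreal_eq_real _ P, hP.1.cfc_eq]
  simp only [IsHermitian.cfc, Unitary.conjStarAlgAut_apply, Real.coe_sqrt, Real.coe_toNNReal']
  congr 2
  ext i j
  simp [diagonal_apply, max_eq_left (hP.eigenvalues_nonneg i)]

lemma sqrtPSD_unique {n : Type*} [Fintype n] [DecidableEq n] {P R : Matrix n n ℝ}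
    (hP : P.PosSemidef) (hR : R.PosSemidef) (h : R * R = P) : sqrtPSD P = R := by
  rw [sqrtPSD_eq_cfc hP, CFC.sqrt_eq_iff _ _ hP.nonneg hR.nonneg]
  exact h

lemma sqrtPSD_psd {n : Type*} [Fintype n] [DecidableEq n] {P : Matrix n n ℝ}
    (hP : P.PosSemidef) : (sqrtPSD P).PosSemidef := by
  rw [sqrtPSD_eq_cfc hP]
  exact (CFC.sqrt_nonneg P).posSemidef

lemma sqrtPSD_mul_self {n : Type*} [Fintype n] [DecidableEq n] {P : Matrix n n ℝ}
    (hP : P.PosSemidef) : sqrtPSD P * sqrtPSD P = P := by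
  rw [sqrtPSD_eq_cfc hP]
  exact CFC.sqrt_mul_sqrt_self P hP.nonneg

end sqrtHelpers
/-- Sum of square roots of eigenvalues (for Hermitian input; junk 0 otherwise). -/
noncomputable def nucSum {n : Type*} [Fintype n] [DecidableEq n] (G : Matrix n n ℝ) : ℝ :=
  by classical exact if h : G.IsHermitian then ∑ j, Real.sqrt (h.eigenvalues j) else 0

lemma nucSum_eq {n : Type*} [Fintype n] [DecidableEq n] {G : Matrix n n ℝ}
    (h : G.IsHermitian) : nucSum G = ∑ j, Real.sqrt (h.eigenvalues j) := by
  rw [nucSum]; exact dif_pos h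

lemma frobSq_eq_sum {m n : Type*} [Fintype m] [Fintype n] (A : Matrix m n ℝ) :
    frobSq A = ∑ j, ∑ i, (A i j) ^ 2 := by
  simp [frobSq, Matrix.trace, Matrix.diag, Matrix.mul_apply, sq]

lemma frobSq_nonneg {m n : Type*} [Fintype m] [Fintype n] (A : Matrix m n ℝ) :
    0 ≤ frobSq A := by
  rw [frobSq_eq_sum]
  exact Finset.sum_nonneg fun j _ => Finset.sum_nonneg fun i _ => sq_nonneg _

/-- Cauchy–Schwarz for dot products. -/
lemma dot_le_sqrt {n : Type*} [Fintype n] (x y : n → ℝ) :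
    x ⬝ᵥ y ≤ Real.sqrt (x ⬝ᵥ x) * Real.sqrt (y ⬝ᵥ y) := by
  have h := Finset.sum_mul_sq_le_sq_mul_sq Finset.univ x y
  have hx : x ⬝ᵥ x = ∑ i, x i ^ 2 := by simp [dotProduct, sq]
  have hy : y ⬝ᵥ y = ∑ i, y i ^ 2 := by simp [dotProduct, sq]
  rw [hx, hy, ← Real.sqrt_mul (Finset.sum_nonneg fun i _ => sq_nonneg _)]
  calc x ⬝ᵥ y ≤ |x ⬝ᵥ y| := le_abs_self _
    _ = Real.sqrt ((x ⬝ᵥ y) ^ 2) := (Real.sqrt_sq_eq_abs _).symm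
    _ ≤ Real.sqrt ((∑ i, x i ^ 2) * ∑ i, y i ^ 2) := Real.sqrt_le_sqrt (by
        simpa [dotProduct] using h)

lemma frobSq_expand {m n : Type*} [Fintype m] [Fintype n] [DecidableEq n]
    (A B : Matrix m n ℝ) (Q : Matrix n n ℝ) (hQ : Q * Qᵀ = 1) :
    frobSq (A - B * Q) = frobSq A + frobSq B - 2 * Matrix.trace ((Bᵀ * A)ᵀ * Q) := by
  have h1 : (A - B * Q)ᵀ * (A - B * Q)
      = Aᵀ * A - Aᵀ * (B * Q) - (B * Q)ᵀ * A + (B * Q)ᵀ * (B * Q) := by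
    rw [Matrix.transpose_sub, Matrix.sub_mul, Matrix.mul_sub, Matrix.mul_sub]
    abel
  have h2 : Matrix.trace ((B * Q)ᵀ * (B * Q)) = Matrix.trace (Bᵀ * B) := by
    rw [Matrix.transpose_mul, show Qᵀ * Bᵀ * (B * Q) = Qᵀ * (Bᵀ * B * Q) by
      rw [Matrix.mul_assoc, Matrix.mul_assoc]]
    rw [Matrix.trace_mul_comm, show Bᵀ * B * Q * Qᵀ = Bᵀ * B * (Q * Qᵀ) from Matrix.mul_assoc _ _ _,
      hQ, Matrix.mul_one]
  have h3 : Matrix.trace ((B * Q)ᵀ * A) = Matrix.trace ((Bᵀ * A)ᵀ * Q) := by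
    calc Matrix.trace ((B * Q)ᵀ * A) = Matrix.trace (Qᵀ * (Bᵀ * A)) := by
          rw [Matrix.transpose_mul, Matrix.mul_assoc]
      _ = Matrix.trace ((Qᵀ * (Bᵀ * A))ᵀ) := (Matrix.trace_transpose _).symm
      _ = Matrix.trace ((Bᵀ * A)ᵀ * Q) := by rw [Matrix.transpose_mul, Matrix.transpose_transpose]
  have h4 : Matrix.trace (Aᵀ * (B * Q)) = Matrix.trace ((Bᵀ * A)ᵀ * Q) := by
    rw [Matrix.transpose_mul, Matrix.transpose_transpose, ← Matrix.mul_assoc]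
  simp only [frobSq]
  rw [h1]
  simp only [Matrix.trace_add, Matrix.trace_sub]
  rw [h2, h3, h4]; ring


set_option linter.unusedSectionVars false


section spec
variable {m n : Type*} [Fintype m] [Fintype n] [DecidableEq n]

lemma posSemidef_tmul (C : Matrix m n ℝ) : (Cᵀ * C).PosSemidef := by
  simpa [Matrix.conjTranspose_eq_transpose_of_trivial] using
    Matrix.posSemidef_conjTranspose_mul_self C

lemma posSemidef_mult (C : Matrix m n ℝ) : (C * Cᵀ).PosSemidef := by
  simpa [Matrix.conjTranspose_eq_transpose_of_trivial] using
    Matrix.posSemidef_self_mul_conjTranspose C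

noncomputable def uvec (C : Matrix m n ℝ) (j : n) : n → ℝ :=
  ⇑((posSemidef_tmul C).1.eigenvectorBasis j)

noncomputable def ev (C : Matrix m n ℝ) (j : n) : ℝ :=
  (posSemidef_tmul C).1.eigenvalues j

lemma ev_nonneg (C : Matrix m n ℝ) (j : n) : 0 ≤ ev C j :=
  (posSemidef_tmul C).eigenvalues_nonneg j

lemma inner_eq_dot {k : Type*} [Fintype k] (x y : EuclideanSpace ℝ k) :
    (inner ℝ x y : ℝ) = (⇑x : k → ℝ) ⬝ᵥ ⇑y := by
  simp [PiLp.inner_apply, dotProduct, RCLike.inner_apply, mul_comm]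

lemma uvec_dot (C : Matrix m n ℝ) (i j : n) :
    uvec C i ⬝ᵥ uvec C j = if i = j then 1 else 0 := by
  have h := (orthonormal_iff_ite.mp (posSemidef_tmul C).1.eigenvectorBasis.orthonormal) i j
  rw [inner_eq_dot] at h
  simpa [uvec] using h

lemma mulVec_uvec (C : Matrix m n ℝ) (j : n) :
    (Cᵀ * C) *ᵥ uvec C j = ev C j • uvec C j := by
  simpa [uvec, ev] using (posSemidef_tmul C).1.mulVec_eigenvectorBasis j

lemma Cu_dot (C : Matrix m n ℝ) (i j : n) :
    (C *ᵥ uvec C i) ⬝ᵥ (C *ᵥ uvec C j) = if i = j then ev C j else 0 := by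
  have h1 : uvec C i ⬝ᵥ ((Cᵀ * C) *ᵥ uvec C j) = (C *ᵥ uvec C i) ⬝ᵥ (C *ᵥ uvec C j) := by
    rw [← Matrix.mulVec_mulVec, Matrix.dotProduct_mulVec, Matrix.vecMul_transpose]
  rw [← h1, mulVec_uvec, dotProduct_smul, uvec_dot]
  simp [mul_ite]

lemma Cu_dot_self (C : Matrix m n ℝ) (j : n) :
    (C *ᵥ uvec C j) ⬝ᵥ (C *ᵥ uvec C j) = ev C j := by
  simpa using Cu_dot C j j

lemma Cu_eq_zero (C : Matrix m n ℝ) {j : n} (h : ev C j = 0) : C *ᵥ uvec C j = 0 := by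
  rw [← dotProduct_self_eq_zero (v := C *ᵥ uvec C j), Cu_dot_self, h]

/-- The orthogonal matrix of eigenvectors (as a plain real matrix). -/
noncomputable def Umat (C : Matrix m n ℝ) : Matrix n n ℝ :=
  (Matrix.IsHermitian.eigenvectorUnitary (posSemidef_tmul C).1 : Matrix n n ℝ)

lemma Umat_apply (C : Matrix m n ℝ) (i j : n) : Umat C i j = uvec C j i := rfl

lemma unitary_real {k : Type*} [Fintype k] [DecidableEq k] {M : Matrix k k ℝ}
    (h : M ∈ Matrix.unitaryGroup k ℝ) : M * Mᵀ = 1 ∧ Mᵀ * M = 1 := by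
  have h1 := h.2  -- M * star M = 1
  have h2 := h.1  -- star M * M = 1
  constructor
  · simpa [Matrix.star_eq_conjTranspose,
      Matrix.conjTranspose_eq_transpose_of_trivial] using h1
  · simpa [Matrix.star_eq_conjTranspose,
      Matrix.conjTranspose_eq_transpose_of_trivial] using h2

lemma Umat_orth (C : Matrix m n ℝ) : Umat C * (Umat C)ᵀ = 1 ∧ (Umat C)ᵀ * Umat C = 1 :=
  unitary_real (Matrix.IsHermitian.eigenvectorUnitary (posSemidef_tmul C).1).2

lemma sum_uvec_mul (C : Matrix m n ℝ) (i k : n) :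
    ∑ j, uvec C j i * uvec C j k = if i = k then 1 else 0 := by
  have h := congrArg (fun M => M i k) (Umat_orth C).1
  simpa [Matrix.mul_apply, Umat_apply, Matrix.one_apply] using h

lemma trace_eq_sum_u (C : Matrix m n ℝ) (X : Matrix n n ℝ) :
    Matrix.trace X = ∑ j, uvec C j ⬝ᵥ (X *ᵥ uvec C j) := by
  have key : ∑ j, uvec C j ⬝ᵥ (X *ᵥ uvec C j) = Matrix.trace ((Umat C)ᵀ * (X * Umat C)) := by
    simp only [Matrix.trace, Matrix.diag, Matrix.mul_apply, Matrix.transpose_apply,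
      dotProduct, Matrix.mulVec, Umat_apply]
  rw [key, Matrix.trace_mul_comm, Matrix.mul_assoc, (Umat_orth C).1, Matrix.mul_one]

end spec

section tracebound
variable {n : Type*} [Fintype n] [DecidableEq n]

lemma trace_CtQ_le (C : Matrix n n ℝ) (Q : Matrix n n ℝ) (hQ : Qᵀ * Q = 1) :
    Matrix.trace ((C : Matrix n n ℝ)ᵀ * Q) ≤ nucSum (Cᵀ * C) := by
  rw [nucSum_eq (posSemidef_tmul C).1, trace_eq_sum_u C (Cᵀ * Q)]
  apply Finset.sum_le_sum
  intro j _
  have h1 : uvec C j ⬝ᵥ ((Cᵀ * Q) *ᵥ uvec C j) = (C *ᵥ uvec C j) ⬝ᵥ (Q *ᵥ uvec C j) := by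
    rw [← Matrix.mulVec_mulVec, Matrix.dotProduct_mulVec, Matrix.vecMul_transpose]
  have h4 : (Q *ᵥ uvec C j) ⬝ᵥ (Q *ᵥ uvec C j) = 1 := by
    have : uvec C j ⬝ᵥ ((Qᵀ * Q) *ᵥ uvec C j) = (Q *ᵥ uvec C j) ⬝ᵥ (Q *ᵥ uvec C j) := by
      rw [← Matrix.mulVec_mulVec, Matrix.dotProduct_mulVec, Matrix.vecMul_transpose]
    rw [← this, hQ, Matrix.one_mulVec, uvec_dot]
    simp
  have h2 := dot_le_sqrt (C *ᵥ uvec C j) (Q *ᵥ uvec C j)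
  rw [Cu_dot_self, h4, Real.sqrt_one, mul_one] at h2
  rw [h1]
  exact h2

lemma trace_CtQ_att (C : Matrix n n ℝ) :
    ∃ Q : Matrix n n ℝ, (Q * Qᵀ = 1 ∧ Qᵀ * Q = 1) ∧
      Matrix.trace (Cᵀ * Q) = nucSum (Cᵀ * C) := by
  classical
  set s : Set n := {j | ev C j ≠ 0} with hs
  -- the normalized images of eigenvectors
  set v : n → EuclideanSpace ℝ n :=
    fun j => (Real.sqrt (ev C j))⁻¹ • ((WithLp.equiv 2 (n → ℝ)).symm (C *ᵥ uvec C j)) with hv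
  have hv_apply : ∀ j, (⇑(v j) : n → ℝ) = fun i => (Real.sqrt (ev C j))⁻¹ * (C *ᵥ uvec C j) i := by
    intro j
    funext i
    simp [hv]
  have hortho : Orthonormal ℝ (s.restrict v) := by
    rw [orthonormal_iff_ite]
    intro i j
    rw [inner_eq_dot]
    have : (⇑(v i.1) : n → ℝ) ⬝ᵥ ⇑(v j.1)
        = (Real.sqrt (ev C i.1))⁻¹ * (Real.sqrt (ev C j.1))⁻¹ *
          ((C *ᵥ uvec C i.1) ⬝ᵥ (C *ᵥ uvec C j.1)) := by
      rw [hv_apply, hv_apply]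
      simp [dotProduct, Finset.mul_sum]
      apply Finset.sum_congr rfl
      intros; ring
    simp only [Set.restrict_apply]
    change (⇑(v i.1) : n → ℝ) ⬝ᵥ ⇑(v j.1) = _
    rw [this, Cu_dot]
    rcases eq_or_ne i j with h | h
    · subst h
      rw [if_pos rfl, if_pos rfl]
      have hj : ev C i.1 ≠ 0 := i.2
      have hj' : 0 < ev C i.1 := lt_of_le_of_ne (ev_nonneg C i.1) (Ne.symm hj)
      have hne : Real.sqrt (ev C i.1) ≠ 0 := by positivity
      field_simp
      exact (Real.sq_sqrt (le_of_lt hj')).symm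
    · have h1 : (i : n) ≠ (j : n) := fun hc => h (Subtype.ext hc)
      rw [if_neg h1, if_neg h]
      ring
  obtain ⟨b', hb'⟩ := hortho.exists_orthonormalBasis_extension_of_card_eq
    (finrank_euclideanSpace (𝕜 := ℝ) (ι := n))
  set B : Matrix n n ℝ := (EuclideanSpace.basisFun n ℝ).toBasis.toMatrix ⇑b' with hB
  have hBmem : B ∈ Matrix.unitaryGroup n ℝ :=
    (EuclideanSpace.basisFun n ℝ).toMatrix_orthonormalBasis_mem_unitary b'
  have hBorth := unitary_real hBmem
  have hB_apply : ∀ i j, B i j = b' j i := by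
    intro i j
    rw [hB, Module.Basis.toMatrix_apply, OrthonormalBasis.coe_toBasis_repr_apply,
      EuclideanSpace.basisFun_repr]
  refine ⟨B * (Umat C)ᵀ, ⟨?_, ?_⟩, ?_⟩
  · rw [Matrix.transpose_mul, Matrix.transpose_transpose, Matrix.mul_assoc,
      ← Matrix.mul_assoc (Umat C)ᵀ, (Umat_orth C).2, Matrix.one_mul, hBorth.1]
  · rw [Matrix.transpose_mul, Matrix.transpose_transpose, Matrix.mul_assoc,
      ← Matrix.mul_assoc Bᵀ, hBorth.2, Matrix.one_mul, (Umat_orth C).1]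
  · rw [← Matrix.mul_assoc, Matrix.trace_mul_comm]
    have key : Matrix.trace ((Umat C)ᵀ * (Cᵀ * B)) = ∑ j, (⇑(b' j) : n → ℝ) ⬝ᵥ (C *ᵥ uvec C j) := by
      simp only [Matrix.trace, Matrix.diag, Matrix.mul_apply, Matrix.transpose_apply,
        dotProduct, Matrix.mulVec, Umat_apply, hB_apply]
      apply Finset.sum_congr rfl
      intro j _
      calc ∑ x, uvec C j x * ∑ y, C y x * b' j y
          = ∑ x, ∑ y, uvec C j x * (C y x * b' j y) := by
            apply Finset.sum_congr rfl; intros; rw [Finset.mul_sum]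
        _ = ∑ y, ∑ x, uvec C j x * (C y x * b' j y) := Finset.sum_comm
        _ = ∑ y, b' j y * ∑ x, C y x * uvec C j x := by
            apply Finset.sum_congr rfl; intro y _
            rw [Finset.mul_sum]
            apply Finset.sum_congr rfl; intros; ring
    rw [key, nucSum_eq (posSemidef_tmul C).1]
    apply Finset.sum_congr rfl
    intro j _
    rcases eq_or_ne (ev C j) 0 with h0 | h0
    · rw [Cu_eq_zero C h0, dotProduct_zero]
      have hq : Real.sqrt (ev C j) = 0 := by rw [h0]; exact Real.sqrt_zero
      exact hq.symm
    · have hj : j ∈ s := h0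
      rw [hb' j hj, hv_apply]
      have : (fun i => (Real.sqrt (ev C j))⁻¹ * (C *ᵥ uvec C j) i) ⬝ᵥ (C *ᵥ uvec C j)
          = (Real.sqrt (ev C j))⁻¹ * ((C *ᵥ uvec C j) ⬝ᵥ (C *ᵥ uvec C j)) := by
        simp [dotProduct, Finset.mul_sum, mul_assoc]
      rw [this, Cu_dot_self]
      have hpos : 0 < ev C j := lt_of_le_of_ne (ev_nonneg C j) (Ne.symm h0)
      have hne : Real.sqrt (ev C j) ≠ 0 := by positivity
      have hgoal : (Real.sqrt (ev C j))⁻¹ * ev C j = Real.sqrt (ev C j) := by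
        rw [inv_mul_eq_div, div_eq_iff hne]
        exact (Real.mul_self_sqrt (le_of_lt hpos)).symm
      exact hgoal
end tracebound

section sqrttrace
variable {m n : Type*} [Fintype m] [Fintype n] [DecidableEq m] [DecidableEq n]

lemma vecMulVec_mul_vecMulVec {k l p : Type*} [Fintype l] (a : k → ℝ) (b c : l → ℝ) (d : p → ℝ) :
    Matrix.vecMulVec a b * Matrix.vecMulVec c d = (b ⬝ᵥ c) • Matrix.vecMulVec a d := by
  ext i j
  simp only [Matrix.mul_apply, Matrix.vecMulVec_apply, Matrix.smul_apply, dotProduct,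
    smul_eq_mul, Finset.sum_mul]
  apply Finset.sum_congr rfl; intros; ring

lemma trace_vecMulVec {k : Type*} [Fintype k] (a b : k → ℝ) :
    Matrix.trace (Matrix.vecMulVec a b) = a ⬝ᵥ b := by
  simp [Matrix.trace, Matrix.diag, Matrix.vecMulVec_apply, dotProduct]

lemma vecMulVec_mulVec {k l : Type*} [Fintype l] (a : k → ℝ) (b : l → ℝ) (x : l → ℝ) :
    Matrix.vecMulVec a b *ᵥ x = (b ⬝ᵥ x) • a := by
  funext i
  simp only [Matrix.mulVec, Matrix.vecMulVec_apply, dotProduct, Pi.smul_apply,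
    smul_eq_mul, Finset.sum_mul]
  apply Finset.sum_congr rfl; intros; ring

lemma sum_W (D : Matrix m n ℝ) :
    ∑ j, Matrix.vecMulVec (D *ᵥ uvec D j) (D *ᵥ uvec D j) = D * Dᵀ := by
  ext p q
  simp only [Matrix.sum_apply, Matrix.vecMulVec_apply, Matrix.mulVec, dotProduct,
    Matrix.mul_apply, Matrix.transpose_apply]
  calc ∑ j, (∑ i, D p i * uvec D j i) * (∑ k, D q k * uvec D j k)
      = ∑ j, ∑ i, ∑ k, (D p i * D q k) * (uvec D j i * uvec D j k) := by
        apply Finset.sum_congr rfl; intro j _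
        rw [Finset.sum_mul]; apply Finset.sum_congr rfl; intro i _
        rw [Finset.mul_sum]; apply Finset.sum_congr rfl; intros; ring
    _ = ∑ i, ∑ k, (D p i * D q k) * (∑ j, uvec D j i * uvec D j k) := by
        rw [Finset.sum_comm]
        apply Finset.sum_congr rfl; intro i _
        rw [Finset.sum_comm]
        apply Finset.sum_congr rfl; intro k _
        rw [Finset.mul_sum]
    _ = ∑ i, D p i * D q i := by
        apply Finset.sum_congr rfl; intro i _
        simp [sum_uvec_mul D, mul_ite, Finset.sum_ite_eq]
end sqrttrace

section sqrtmain
variable {m n : Type*} [Fintype m] [Fintype n] [DecidableEq m] [DecidableEq n]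

lemma posSemidef_vecMulVec {k : Type*} [Fintype k] (w : k → ℝ) :
    (Matrix.vecMulVec w w).PosSemidef := by
  refine Matrix.PosSemidef.of_dotProduct_mulVec_nonneg ?_ ?_
  · show (Matrix.vecMulVec w w)ᴴ = _
    ext i j
    simp [Matrix.conjTranspose_apply, Matrix.vecMulVec_apply, mul_comm]
  · intro x
    have hx : star x = x := by funext i; simp
    rw [hx, _root_.vecMulVec_mulVec, dotProduct_smul, smul_eq_mul, dotProduct_comm]
    exact mul_self_nonneg _

lemma posSemidef_smul' {k : Type*} [Fintype k] {c : ℝ} (hc : 0 ≤ c) {A : Matrix k k ℝ}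
    (hA : A.PosSemidef) : (c • A).PosSemidef := by
  refine Matrix.PosSemidef.of_dotProduct_mulVec_nonneg ?_ ?_
  · show (c • A)ᴴ = c • A
    rw [Matrix.conjTranspose_smul, hA.1]
    congr 1
  · intro x
    rw [Matrix.smul_mulVec, dotProduct_smul, smul_eq_mul]
    exact mul_nonneg hc (hA.dotProduct_mulVec_nonneg x)

lemma trace_sqrtPSD_self_mul (D : Matrix m n ℝ) :
    Matrix.trace (sqrtPSD (D * Dᵀ)) = nucSum (Dᵀ * D) := by
  classical
  have hH : (D * Dᵀ).PosSemidef := posSemidef_mult D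
  set c : n → ℝ := fun j => if ev D j = 0 then 0 else (Real.sqrt (ev D j))⁻¹ with hc
  set W : n → Matrix m m ℝ := fun j => Matrix.vecMulVec (D *ᵥ uvec D j) (D *ᵥ uvec D j) with hWd
  set R : Matrix m m ℝ := ∑ j, c j • W j with hRd
  have hc_nonneg : ∀ j, 0 ≤ c j := by
    intro j
    rw [hc]
    dsimp only
    split
    · exact le_refl 0
    · positivity
  have hWzero : ∀ j, ev D j = 0 → W j = 0 := by
    intro j h
    rw [hWd]
    dsimp only
    rw [Cu_eq_zero D h]
    ext i k
    simp [Matrix.vecMulVec_apply]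
  have hRpsd : R.PosSemidef := by
    rw [hRd]
    apply Finset.sum_induction _ _ (fun a b ha hb => ha.add hb) Matrix.PosSemidef.zero
    intro j _
    exact posSemidef_smul' (hc_nonneg j) (posSemidef_vecMulVec _)
  have hRsq : R * R = D * Dᵀ := by
    rw [hRd, Finset.sum_mul_sum]
    have hterm : ∀ i j : n, (c i • W i) * (c j • W j)
        = if i = j then (c j * c j * ev D j) • W j else 0 := by
      intro i j
      rw [smul_mul_smul_comm, hWd]
      dsimp only
      rw [_root_.vecMulVec_mul_vecMulVec, Cu_dot]
      rcases eq_or_ne i j with h | h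
      · subst h
        rw [if_pos rfl, if_pos rfl, smul_smul]
      · rw [if_neg h, if_neg h, zero_smul, smul_zero]
    calc ∑ i, ∑ j, (c i • W i) * (c j • W j)
        = ∑ i, ∑ j, (if i = j then (c j * c j * ev D j) • W j else 0) := by
          apply Finset.sum_congr rfl; intro i _
          apply Finset.sum_congr rfl; intro j _
          exact hterm i j
      _ = ∑ j, (c j * c j * ev D j) • W j := by
          rw [Finset.sum_comm]
          apply Finset.sum_congr rfl; intro j _
          simp
      _ = ∑ j, W j := by
          apply Finset.sum_congr rfl; intro j _
          rcases eq_or_ne (ev D j) 0 with h | h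
          · rw [hWzero j h, smul_zero]
          · have hpos : 0 < ev D j := lt_of_le_of_ne (ev_nonneg D j) (Ne.symm h)
            have hne : Real.sqrt (ev D j) ≠ 0 := by positivity
            have : c j * c j * ev D j = 1 := by
              rw [hc]
              dsimp only
              rw [if_neg h]
              rw [show (Real.sqrt (ev D j))⁻¹ * (Real.sqrt (ev D j))⁻¹ * ev D j
                = ev D j / (Real.sqrt (ev D j) * Real.sqrt (ev D j)) by ring]
              rw [Real.mul_self_sqrt (le_of_lt hpos), div_self h]
            rw [this, one_smul]
      _ = D * Dᵀ := sum_W D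
  have hfin : R = sqrtPSD (D * Dᵀ) := (sqrtPSD_unique hH hRpsd hRsq).symm
  have hsq : sqrtPSD (D * Dᵀ) = sqrtPSD (D * Dᵀ) := rfl
  rw [hsq, ← hfin, hRd, Matrix.trace_sum, nucSum_eq (posSemidef_tmul D).1]
  apply Finset.sum_congr rfl
  intro j _
  rw [Matrix.trace_smul, hWd]
  dsimp only
  rw [_root_.trace_vecMulVec, Cu_dot_self, smul_eq_mul]
  rcases eq_or_ne (ev D j) 0 with h | h
  · rw [hc]
    dsimp only
    rw [if_pos h, zero_mul]
    have : ((posSemidef_tmul D).1.eigenvalues j) = ev D j := rfl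
    rw [this, h, Real.sqrt_zero]
  · have hpos : 0 < ev D j := lt_of_le_of_ne (ev_nonneg D j) (Ne.symm h)
    have hne : Real.sqrt (ev D j) ≠ 0 := by positivity
    rw [hc]
    dsimp only
    rw [if_neg h, inv_mul_eq_div, div_eq_iff hne]
    exact (Real.mul_self_sqrt (le_of_lt hpos)).symm
end sqrtmain

section percolumn
variable {m n : Type*} [Fintype m] [Fintype n] [DecidableEq m] [DecidableEq n]

lemma colIsLeast (A B : Matrix m n ℝ) :
    IsLeast {x : ℝ | ∃ Q : Matrix n n ℝ, (Q * Qᵀ = 1 ∧ Qᵀ * Q = 1) ∧ x = frobSq (A - B * Q)}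
      (frobSq A + frobSq B - 2 * nucSum ((Bᵀ * A)ᵀ * (Bᵀ * A))) := by
  constructor
  · obtain ⟨Q, hQ, htr⟩ := trace_CtQ_att (Bᵀ * A)
    exact ⟨Q, hQ, by rw [frobSq_expand A B Q hQ.1, htr]⟩
  · rintro x ⟨Q, hQ, rfl⟩
    rw [frobSq_expand A B Q hQ.1]
    have := trace_CtQ_le (Bᵀ * A) Q hQ.2
    linarith

lemma dBW_sq_eq (A B : Matrix m n ℝ) :
    dBW (A * Aᵀ) (B * Bᵀ) ^ 2 = frobSq A + frobSq B - 2 * nucSum ((Bᵀ * A)ᵀ * (Bᵀ * A)) := by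
  have hS2 : (B * Bᵀ).PosSemidef := posSemidef_mult B
  have hS : sqrtPSD (B * Bᵀ) = sqrtPSD (B * Bᵀ) := rfl
  have hSsymm : (sqrtPSD (B * Bᵀ))ᵀ = sqrtPSD (B * Bᵀ) := by
    rw [hS]
    have h : (sqrtPSD (B * Bᵀ))ᴴ = sqrtPSD (B * Bᵀ) := (sqrtPSD_psd hS2).1
    rwa [Matrix.conjTranspose_eq_transpose_of_trivial] at h
  have hSS : sqrtPSD (B * Bᵀ) * sqrtPSD (B * Bᵀ) = B * Bᵀ := by
    rw [hS]; exact sqrtPSD_mul_self hS2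
  set S := sqrtPSD (B * Bᵀ) with hSd
  have hmid : S * (A * Aᵀ) * S = (S * A) * (S * A)ᵀ := by
    rw [Matrix.transpose_mul, hSsymm, ← Matrix.mul_assoc, Matrix.mul_assoc (S * A)]
  have htr : Matrix.trace (sqrtPSD (S * (A * Aᵀ) * S)) = nucSum ((Bᵀ * A)ᵀ * (Bᵀ * A)) := by
    rw [hmid, trace_sqrtPSD_self_mul (S * A)]
    congr 1
    calc (S * A)ᵀ * (S * A) = Aᵀ * ((S * S) * A) := by
          rw [Matrix.transpose_mul, hSsymm, Matrix.mul_assoc, Matrix.mul_assoc]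
      _ = Aᵀ * ((B * Bᵀ) * A) := by rw [hSS]
      _ = (Bᵀ * A)ᵀ * (Bᵀ * A) := by
          rw [Matrix.transpose_mul, Matrix.transpose_transpose, Matrix.mul_assoc,
            Matrix.mul_assoc]
  have e_nonneg : 0 ≤ frobSq A + frobSq B - 2 * nucSum ((Bᵀ * A)ᵀ * (Bᵀ * A)) := by
    obtain ⟨Q, hQ, hv⟩ := (colIsLeast A B).1
    rw [hv]
    exact frobSq_nonneg _
  rw [dBW, Matrix.trace_mul_comm A Aᵀ, Matrix.trace_mul_comm B Bᵀ, htr]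
  rw [show Matrix.trace (Aᵀ * A) = frobSq A from rfl, show Matrix.trace (Bᵀ * B) = frobSq B from rfl]
  exact Real.sq_sqrt e_nonneg
end percolumn

section blocks

lemma sum_fin_tail {T c : ℕ} (hc : c ≤ T) (h : Fin T → ℝ)
    (h0 : ∀ s : Fin T, s.val < c → h s = 0) :
    ∑ s, h s = ∑ a : Fin (T - c), h ⟨c + a.val, by omega⟩ := by
  have e : c + (T - c) = T := by omega
  have heq := Fintype.sum_equiv (finCongr e)
    (fun s : Fin (c + (T - c)) => h (finCongr e s)) h (fun s => rfl)
  rw [← heq, Fin.sum_univ_add]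
  have hz : ∑ i : Fin c, h (finCongr e (Fin.castAdd (T - c) i)) = 0 := by
    apply Finset.sum_eq_zero
    intro i _
    apply h0
    simpa using i.isLt
  rw [hz, zero_add]
  apply Finset.sum_congr rfl
  intro a _
  congr 1

lemma frobSq_block {d T : ℕ} (L M : Matrix (Fin d × Fin T) (Fin d × Fin T) ℝ)
    (hL : BlockLT L) (hM : BlockLT M) (f : Fin T → Matrix (Fin d) (Fin d) ℝ) :
    frobSq (L - M * Matrix.blockDiagonal f)
      = ∑ t : Fin T, frobSq (truncCol L t - truncCol M t * f t) := by
  rw [frobSq_eq_sum, Fintype.sum_prod_type, Finset.sum_comm]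
  apply Finset.sum_congr rfl
  intro t _
  rw [frobSq_eq_sum]
  apply Finset.sum_congr rfl
  intro j _
  have hentry : ∀ p : Fin d × Fin T, (L - M * Matrix.blockDiagonal f) p (j, t)
      = L p (j, t) - ∑ k : Fin d, M p (k, t) * f t k j := by
    intro p
    simp only [Matrix.sub_apply, Matrix.mul_apply, Matrix.blockDiagonal_apply]
    congr 1
    rw [Fintype.sum_prod_type]
    apply Finset.sum_congr rfl
    intro k _
    simp [mul_ite, Finset.sum_ite_eq']
  set g : Fin d → Fin T → ℝ := fun i s => L (i, s) (j, t) - ∑ k, M (i, s) (k, t) * f t k j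
    with hg
  have hLHS : ∑ p : Fin d × Fin T, ((L - M * Matrix.blockDiagonal f) p (j, t))^2
      = ∑ s : Fin T, ∑ i : Fin d, (g i s)^2 := by
    rw [Fintype.sum_prod_type, Finset.sum_comm]
    apply Finset.sum_congr rfl; intro s _
    apply Finset.sum_congr rfl; intro i _
    rw [hentry (i, s)]
  have h0 : ∀ s : Fin T, s.val < t.val → (∑ i, (g i s)^2) = 0 := by
    intro s hs
    apply Finset.sum_eq_zero; intro i _
    have hst : s < t := hs
    rw [hg]; dsimp only
    rw [hL (i, s) (j, t) hst]
    have hMk : ∀ k, M (i, s) (k, t) = 0 := fun k => hM (i, s) (k, t) hst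
    simp [hMk]
  have hRHS : ∑ p : Fin (T - t.val) × Fin d, ((truncCol L t - truncCol M t * f t) p j)^2
      = ∑ a : Fin (T - t.val), ∑ i : Fin d, (g i ⟨t.val + a.val, by omega⟩)^2 := by
    rw [Fintype.sum_prod_type]
    apply Finset.sum_congr rfl; intro a _
    apply Finset.sum_congr rfl; intro i _
    rw [hg]; dsimp only
    simp [truncCol, Matrix.sub_apply, Matrix.mul_apply]
  rw [hLHS, hRHS]
  exact sum_fin_tail (le_of_lt t.isLt) (fun s => ∑ i, (g i s)^2) h0

end blocks


/-- For `L, M ∈ 𝕃`, the squared adapted Bures–Wasserstein distance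
`d_ABW(L,M)² = min_{O ∈ 𝕆} ‖L − MO‖_F²` (the minimum is attained) decomposes column-wise:
it equals `∑_{t} d_BW(Σ̃_t^L, Σ̃_t^M)²`. -/
theorem stmt0 (d T : ℕ) (hd : 0 < d) (hT : 0 < T)
    (L M : Matrix (Fin d × Fin T) (Fin d × Fin T) ℝ)
    (hL : BlockLT L) (hM : BlockLT M) :
    IsLeast {x : ℝ | ∃ O, BlockOrth O ∧ x = frobSq (L - M * O)}
      (∑ t : Fin T, dBW (colCov L t) (colCov M t) ^ 2) := by
  classical
  have hcol : ∀ t : Fin T,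
      IsLeast {x : ℝ | ∃ Q : Matrix (Fin d) (Fin d) ℝ, (Q * Qᵀ = 1 ∧ Qᵀ * Q = 1) ∧
        x = frobSq (truncCol L t - truncCol M t * Q)}
        (dBW (colCov L t) (colCov M t) ^ 2) := by
    intro t
    have h1 := colIsLeast (truncCol L t) (truncCol M t)
    have h2 := dBW_sq_eq (truncCol L t) (truncCol M t)
    rw [show colCov L t = truncCol L t * (truncCol L t)ᵀ from rfl,
      show colCov M t = truncCol M t * (truncCol M t)ᵀ from rfl, h2]
    exact h1
  constructor
  · have hmem := fun t => (hcol t).1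
    choose Q hQorth hQval using hmem
    refine ⟨Matrix.blockDiagonal Q, ⟨Q, fun t => ⟨(hQorth t).1, (hQorth t).2⟩, rfl⟩, ?_⟩
    rw [frobSq_block L M hL hM Q]
    exact Finset.sum_congr rfl fun t _ => hQval t
  · rintro x ⟨O, ⟨f, hf, rfl⟩, rfl⟩
    rw [frobSq_block L M hL hM f]
    apply Finset.sum_le_sum
    intro t _
    exact (hcol t).2 ⟨f t, ⟨(hf t).1, (hf t).2⟩, rfl⟩
end

section
/- Let m, d be positive integers and let A, B ∈ ℝ^{m×d}. Then min_{O ∈ O(d)} ‖A − BO‖_F² = ‖A‖_F² + ‖B‖_F² − 2 tr(((BᵀA)ᵀ(BᵀA))^{1/2}); that is, the optimal orthogonal Procrustes value equals the sum of the squared Frobenius norms minus twice the nuclear norm of BᵀA (the sum of the singular values of BᵀA). -/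
open Matrix

lemma ctEq {α β : Type*} [Fintype α] [Fintype β] (M : Matrix α β ℝ) : Mᴴ = Mᵀ := by
  ext i j; simp [conjTranspose_apply]

lemma entryDot {d : ℕ} (X N Y : Matrix (Fin d) (Fin d) ℝ) (i j : Fin d) :
    (Xᵀ * N * Y) i j = (fun r => X r i) ⬝ᵥ (N *ᵥ fun c => Y c j) := by
  simp only [Matrix.mul_apply, Matrix.mulVec, dotProduct, transpose_apply,
    Finset.sum_mul, Finset.mul_sum]
  rw [Finset.sum_comm]
  apply Finset.sum_congr rfl; intro c _
  apply Finset.sum_congr rfl; intro r _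
  ring

lemma dotCS {d : ℕ} (x y : Fin d → ℝ) :
    x ⬝ᵥ y ≤ Real.sqrt (x ⬝ᵥ x) * Real.sqrt (y ⬝ᵥ y) := by
  have := Real.sum_mul_le_sqrt_mul_sqrt Finset.univ x y
  simpa [dotProduct, pow_two] using this

lemma procrustes_max {d : ℕ} (M : Matrix (Fin d) (Fin d) ℝ) :
    IsGreatest {x : ℝ | ∃ O : Matrix (Fin d) (Fin d) ℝ, IsOrth O ∧ x = Matrix.trace (Oᵀ * M)}
      (Matrix.trace (sqrtPSD (Mᵀ * M))) := by
  classical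
  have hH : (Mᵀ * M).PosSemidef := by
    have := Matrix.posSemidef_conjTranspose_mul_self M
    rwa [ctEq] at this
  set V : Matrix (Fin d) (Fin d) ℝ := (hH.1.eigenvectorUnitary : Matrix (Fin d) (Fin d) ℝ) with hVdef
  have hVsV : Vᵀ * V = 1 := by
    have := Matrix.mem_unitaryGroup_iff'.mp hH.1.eigenvectorUnitary.2
    rwa [Matrix.star_eq_conjTranspose, ctEq] at this
  have hVVs : V * Vᵀ = 1 := by
    have := Matrix.mem_unitaryGroup_iff.mp hH.1.eigenvectorUnitary.2
    rwa [Matrix.star_eq_conjTranspose, ctEq] at this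
  set ev : Fin d → ℝ := hH.1.eigenvalues with hevdef
  have hev : ∀ i, 0 ≤ ev i := fun i => hH.eigenvalues_nonneg i
  set σ : Fin d → ℝ := fun i => Real.sqrt (ev i) with hσdef
  have hσsq : ∀ i, σ i ^ 2 = ev i := fun i => Real.sq_sqrt (hev i)
  have hdiag : Vᵀ * (Mᵀ * M) * V = Matrix.diagonal ev := by
    have := hH.1.conjStarAlgAut_star_eigenvectorUnitary
    rw [Unitary.conjStarAlgAut_star_apply, Matrix.star_eq_conjTranspose, ctEq] at this
    convert this using 2 <;> rfl
  -- spectral decomposition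
  have hspec : Mᵀ * M = V * Matrix.diagonal ev * Vᵀ := by
    rw [← hdiag]
    have h2 : V * (Vᵀ * (Mᵀ * M) * V) * Vᵀ = (V * Vᵀ) * (Mᵀ * M) * (V * Vᵀ) := by
      simp only [mul_assoc]
    rw [h2, hVVs, one_mul, mul_one]
  -- the sqrt
  have hDσ : (Matrix.diagonal σ).PosSemidef := by
    rw [Matrix.posSemidef_diagonal_iff]
    exact fun i => Real.sqrt_nonneg _
  have hsqrt : sqrtPSD (Mᵀ * M) = V * Matrix.diagonal σ * Vᵀ := by
    rw [sqrtPSD, dif_pos hH, Matrix.star_eq_conjTranspose, ctEq]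
  have htrace : Matrix.trace (sqrtPSD (Mᵀ * M)) = ∑ i, σ i := by
    rw [hsqrt, Matrix.trace_mul_cycle, hVsV, one_mul, Matrix.trace_diagonal]
  -- column facts
  have hMv : ∀ i j, (M *ᵥ fun r => V r i) ⬝ᵥ (M *ᵥ fun r => V r j)
      = if i = j then ev i else 0 := by
    intro i j
    have h1 : (fun r => V r i) ⬝ᵥ ((Mᵀ * M) *ᵥ fun r => V r j)
        = if i = j then ev i else 0 := by
      rw [← entryDot, hdiag, Matrix.diagonal_apply]
    rw [← Matrix.mulVec_mulVec, Matrix.dotProduct_mulVec, Matrix.vecMul_transpose] at h1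
    exact h1
  have hVcol : ∀ i j, (fun r => V r i) ⬝ᵥ (fun r => V r j) = if i = j then 1 else 0 := by
    intro i j
    have := entryDot V 1 V i j
    rw [mul_one, hVsV] at this
    rw [Matrix.one_apply] at this
    simp only [Matrix.one_mulVec] at this
    exact this.symm
  constructor
  · -- membership: construct a maximizing orthogonal matrix
    rw [htrace]
    set s : Set (Fin d) := {i | ev i ≠ 0} with hs
    have hσne : ∀ i ∈ s, σ i ≠ 0 := by
      intro i hi
      simp only [hσdef]
      exact Real.sqrt_ne_zero'.mpr (lt_of_le_of_ne (hev i) (Ne.symm hi))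
    set u : Fin d → EuclideanSpace ℝ (Fin d) :=
      fun i => (σ i)⁻¹ • (WithLp.toLp 2 (M *ᵥ fun c => V c i : Fin d → ℝ) : EuclideanSpace ℝ (Fin d)) with hu
    have huorth : Orthonormal ℝ (s.restrict u) := by
      rw [orthonormal_iff_ite]
      rintro ⟨i, hi⟩ ⟨j, hj⟩
      simp only [Set.restrict_apply, hu]
      show inner ℝ ((σ i)⁻¹ • WithLp.toLp 2 (M *ᵥ fun c => V c i))
        ((σ j)⁻¹ • WithLp.toLp 2 (M *ᵥ fun c => V c j)) = _
      rw [real_inner_comm]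
      rw [inner_smul_left, inner_smul_right, PiLp.inner_apply]
      simp only [RCLike.inner_apply, conj_trivial, starRingEnd_apply, star_trivial, PiLp.toLp_apply]
      rw [show (∑ k, (M *ᵥ fun c => V c i) k * (M *ᵥ fun c => V c j) k)
          = if i = j then ev i else 0 from hMv i j]
      by_cases hij : i = j
      · subst hij
        rw [if_pos rfl, if_pos rfl, ← hσsq i, pow_two]
        field_simp [hσne i hi]
      · rw [if_neg hij, if_neg (by simpa [Subtype.mk_eq_mk] using hij)]
        simp
    have hcard : Module.finrank ℝ (EuclideanSpace ℝ (Fin d)) = Fintype.card (Fin d) := by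
      simp [finrank_euclideanSpace]
    obtain ⟨b, hb⟩ := huorth.exists_orthonormalBasis_extension_of_card_eq hcard
    set U : Matrix (Fin d) (Fin d) ℝ := Matrix.of fun r i => b i r with hU
    have hUtU : Uᵀ * U = 1 := by
      ext i j
      have hbo := b.orthonormal
      rw [orthonormal_iff_ite] at hbo
      have h := hbo i j
      rw [PiLp.inner_apply] at h
      simp only [RCLike.inner_apply, conj_trivial] at h
      rw [Matrix.mul_apply, Matrix.one_apply]
      simpa [hU, Matrix.transpose_apply, mul_comm] using h
    have hUUt : U * Uᵀ = 1 := mul_eq_one_comm.mp hUtU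
    refine ⟨U * Vᵀ, ⟨?_, ?_⟩, ?_⟩
    · have h2 : U * Vᵀ * (U * Vᵀ)ᵀ = U * (Vᵀ * V) * Uᵀ := by
        rw [Matrix.transpose_mul, Matrix.transpose_transpose]
        simp only [mul_assoc]
      rw [h2, hVsV, mul_one, hUUt]
    · have h2 : (U * Vᵀ)ᵀ * (U * Vᵀ) = V * (Uᵀ * U) * Vᵀ := by
        rw [Matrix.transpose_mul, Matrix.transpose_transpose]
        simp only [mul_assoc]
      rw [h2, hUtU, mul_one, hVVs]
    · have h2 : (U * Vᵀ)ᵀ * M = V * (Uᵀ * M) := by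
        rw [Matrix.transpose_mul, Matrix.transpose_transpose, mul_assoc]
      rw [h2, Matrix.trace_mul_comm, mul_assoc]
      have h3 : Matrix.trace (Uᵀ * (M * V)) = ∑ i, (Uᵀ * M * V) i i := by
        rw [← mul_assoc]
        rfl
      rw [h3]
      apply Finset.sum_congr rfl
      intro i _
      rw [entryDot]
      by_cases hi : ev i = 0
      · have hzero : (M *ᵥ fun c => V c i) = 0 := by
          have := hMv i i
          rw [if_pos rfl, hi] at this
          exact dotProduct_self_eq_zero.mp this
        rw [show (fun r => U r i) ⬝ᵥ (M *ᵥ fun c => V c i) = 0 by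
          rw [hzero, dotProduct_zero]]
        simp [hσdef, hi]
      · have hbi : b i = u i := hb i hi
        have hcol : (fun r => U r i) = fun r => u i r := by
          funext r
          simp [hU, hbi]
        rw [hcol]
        have hdot : (fun r => u i r) ⬝ᵥ (M *ᵥ fun c => V c i)
            = (σ i)⁻¹ * ((M *ᵥ fun c => V c i) ⬝ᵥ (M *ᵥ fun c => V c i)) := by
          simp only [hu, dotProduct, Finset.mul_sum]
          apply Finset.sum_congr rfl
          intro k _
          show (σ i)⁻¹ * (M *ᵥ fun c => V c i) k * (M *ᵥ fun c => V c i) k = _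
          ring
        rw [hdot, hMv i i, if_pos rfl, ← hσsq i, pow_two,
          inv_mul_cancel_left₀ (hσne i hi)]
  · -- upper bound
    rintro x ⟨O, hO, rfl⟩
    rw [htrace]
    have e1 : Matrix.trace ((O * V)ᵀ * M * V) = Matrix.trace (Oᵀ * M) := by
      rw [Matrix.transpose_mul]
      have h2 : Vᵀ * Oᵀ * M * V = Vᵀ * (Oᵀ * M * V) := by simp only [mul_assoc]
      rw [h2, Matrix.trace_mul_comm Vᵀ (Oᵀ * M * V)]
      have h3 : Oᵀ * M * V * Vᵀ = Oᵀ * M * (V * Vᵀ) := by simp only [mul_assoc]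
      rw [h3, hVVs, mul_one]
    rw [← e1]
    have e2 : Matrix.trace ((O * V)ᵀ * M * V) = ∑ i, ((O * V)ᵀ * M * V) i i := rfl
    rw [e2]
    apply Finset.sum_le_sum
    intro i _
    rw [entryDot]
    have hOVcol : (fun r => (O * V) r i) ⬝ᵥ (fun r => (O * V) r i) = 1 := by
      have := entryDot (O * V) 1 (O * V) i i
      rw [mul_one] at this
      have h2 : (O * V)ᵀ * (O * V) = Vᵀ * (Oᵀ * O) * V := by
        rw [Matrix.transpose_mul]
        simp only [mul_assoc]
      rw [h2, hO.2, mul_one, hVsV] at this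
      simp only [Matrix.one_mulVec, Matrix.one_apply_eq] at this
      exact this.symm
    calc ((fun r => (O * V) r i) ⬝ᵥ (M *ᵥ fun c => V c i))
        ≤ Real.sqrt ((fun r => (O * V) r i) ⬝ᵥ (fun r => (O * V) r i)) *
          Real.sqrt ((M *ᵥ fun c => V c i) ⬝ᵥ (M *ᵥ fun c => V c i)) := dotCS _ _
      _ = σ i := by
          rw [hOVcol, hMv i i, if_pos rfl]
          simp [hσdef]

lemma frob_expand {m d : ℕ} (A B : Matrix (Fin m) (Fin d) ℝ) (O : Matrix (Fin d) (Fin d) ℝ)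
    (hO : IsOrth O) :
    frobSq (A - B * O) = frobSq A + frobSq B - 2 * Matrix.trace (Oᵀ * (Bᵀ * A)) := by
  have expand : (A - B * O)ᵀ * (A - B * O)
      = Aᵀ * A - Aᵀ * (B * O) - ((B * O)ᵀ * A - (B * O)ᵀ * (B * O)) := by
    rw [Matrix.transpose_sub, Matrix.sub_mul, Matrix.mul_sub, Matrix.mul_sub]
  have h1 : Matrix.trace (Aᵀ * (B * O)) = Matrix.trace (Oᵀ * (Bᵀ * A)) := by
    rw [← Matrix.trace_transpose (Oᵀ * (Bᵀ * A))]
    congr 1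
    rw [Matrix.transpose_mul, Matrix.transpose_mul, Matrix.transpose_transpose,
      Matrix.transpose_transpose, Matrix.mul_assoc]
  have h2 : Matrix.trace ((B * O)ᵀ * A) = Matrix.trace (Oᵀ * (Bᵀ * A)) := by
    rw [Matrix.transpose_mul, Matrix.mul_assoc]
  have h3 : Matrix.trace ((B * O)ᵀ * (B * O)) = Matrix.trace (Bᵀ * B) := by
    have e1 : (B * O)ᵀ * (B * O) = Oᵀ * (Bᵀ * B) * O := by
      rw [Matrix.transpose_mul]
      simp only [Matrix.mul_assoc]
    rw [e1, Matrix.trace_mul_comm (Oᵀ * (Bᵀ * B)) O, ← mul_assoc, hO.1, one_mul]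
  show Matrix.trace ((A - B * O)ᵀ * (A - B * O)) = _
  rw [expand, Matrix.trace_sub, Matrix.trace_sub, Matrix.trace_sub, h1, h2, h3]
  show _ = Matrix.trace (Aᵀ * A) + Matrix.trace (Bᵀ * B) - _
  ring

/-- The optimal orthogonal Procrustes value:
`min_{O ∈ O(d)} ‖A − BO‖_F² = ‖A‖_F² + ‖B‖_F² − 2 tr(((BᵀA)ᵀ(BᵀA))^{1/2})`,
i.e. it subtracts twice the nuclear norm of `BᵀA`. -/
theorem stmt18 (m d : ℕ) (hm : 0 < m) (hd : 0 < d)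
    (A B : Matrix (Fin m) (Fin d) ℝ) :
    IsLeast {x : ℝ | ∃ O : Matrix (Fin d) (Fin d) ℝ, IsOrth O ∧ x = frobSq (A - B * O)}
      (frobSq A + frobSq B -
        2 * Matrix.trace (sqrtPSD ((Bᵀ * A)ᵀ * (Bᵀ * A)))) := by
  obtain ⟨hmem, hub⟩ := procrustes_max (Bᵀ * A)
  constructor
  · obtain ⟨O, hO, hOval⟩ := hmem
    exact ⟨O, hO, by rw [frob_expand A B O hO, ← hOval]⟩
  · rintro x ⟨O, hO, rfl⟩
    have hle := hub ⟨O, hO, rfl⟩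
    rw [frob_expand A B O hO]
    linarith
end
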